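/- arXiv:1908.03874 — 2 statements merged into one kernel-verified Lean document; each statement's English description precedes it below -/
import Mathlib

section
/- Fix 0 < q < 1 and define f : (q,1) → ℝ by f(r) = (1 − r²) ∏_{j=1}^{∞} [ ((1 − q^{2j} r²)(1 − q^{2j}/r²)) / (1 − q^{2j})² ]^{(−1)^j}. Then the infinite product converges for every r ∈ (q,1), f(r) → 0 as r → 1⁻, and f(r) → +∞ as r → q⁺. -/
/-- The `j`-th factor (for `j ≥ 1`) of the radial-slit Mityuk radius product for
the annulus `{q < |z| < 1}`, with the alternating exponent `(−1)^j`. -/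
noncomputable def mityukFactorRad (q r : ℝ) (j : ℕ) : ℝ :=
  (((1 - q ^ (2 * j) * r ^ 2) * (1 - q ^ (2 * j) / r ^ 2)) / (1 - q ^ (2 * j)) ^ 2)
    ^ ((-1 : ℤ) ^ j)

/-- Mityuk's radius for the annulus with respect to the radial-slit canonical
domain, `f(r) = (1 − r²) ∏_{j=1}^∞ [(1 − q^{2j} r²)(1 − q^{2j}/r²)/(1 − q^{2j})²]^{(−1)^j}`. -/
noncomputable def mityukRadiusRad (q r : ℝ) : ℝ :=
  (1 - r ^ 2) * ∏' j : ℕ, mityukFactorRad q r (j + 1)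

/-!
Taking logarithms, the `j`-th factor contributes `(-1)^j log c_j(r)`, where
`c_j(r) = (1 - q^{2j} r²)(1 - q^{2j}/r²)/(1 - q^{2j})²`. Each of the three logarithms is
`O(q^{2j}/r²)`, and for `j ≥ 2` and `q < r < 1` we have `q^{2j}/r² ≤ q^{2j-2} ≤ q²`, so the
logarithms of the factors with `j ≥ 2` are dominated by a geometric series uniformly in
`r ∈ (q, 1)`. Hence `f(r) = (1 - r²)/c_1(r) · e^{T(r)}` with `|T(r)| ≤ K` on the whole
interval.
Since `c_1(1) = 1`, the prefactor tends to `0` as `r → 1`; since the factor `1 - q²/r²` of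
`c_1(r)` vanishes at `r = q`, it tends to `+∞` as `r → q⁺`.
-/

open Real Filter Set Topology

lemma abs_log_one_sub_le {x m : ℝ} (hxm : |x| ≤ m) (hm : m < 1) :
    |log (1 - x)| ≤ |x| / (1 - m) := by
  have h := abs_log_sub_add_sum_range_le (hxm.trans_lt hm) 0
  simp only [Finset.range_zero, Finset.sum_empty, zero_add, pow_one] at h
  exact h.trans (by gcongr)

lemma zpow_neg_one_pow_eq_exp {x : ℝ} (hx : 0 < x) (n : ℕ) :
    x ^ ((-1 : ℤ) ^ n) = exp ((-1) ^ n * log x) := by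
  rw [← rpow_intCast, rpow_def_of_pos hx, mul_comm]
  push_cast
  rfl

/-- The base of `mityukFactorRad q r j`, as a function of `t = q ^ (2 * j)`. -/
noncomputable def mityukBase (t r : ℝ) : ℝ :=
  ((1 - t * r ^ 2) * (1 - t / r ^ 2)) / (1 - t) ^ 2

section Base

variable {t r m : ℝ}

lemma mul_sq_le_div_sq_and_le_div_sq (ht : 0 ≤ t) (hr0 : 0 < r) (hr1 : r ≤ 1) :
    t * r ^ 2 ≤ t / r ^ 2 ∧ t ≤ t / r ^ 2 := by
  have hr2 : r ^ 2 ≤ 1 := pow_le_one₀ hr0.le hr1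
  have h1 : t ≤ t / r ^ 2 := le_div_self ht (by positivity) hr2
  exact ⟨(mul_le_of_le_one_right ht hr2).trans h1, h1⟩

lemma mityukBase_pos (ht : 0 ≤ t) (hr0 : 0 < r) (hr1 : r ≤ 1) (htr : t / r ^ 2 < 1) :
    0 < mityukBase t r := by
  obtain ⟨h1, h2⟩ := mul_sq_le_div_sq_and_le_div_sq ht hr0 hr1
  unfold mityukBase
  have : t < 1 := by linarith
  apply div_pos (mul_pos _ _) _ <;> nlinarith

lemma abs_log_mityukBase_le (ht : 0 ≤ t) (hr0 : 0 < r) (hr1 : r ≤ 1)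
    (htr : t / r ^ 2 ≤ m) (hm : m < 1) :
    |log (mityukBase t r)| ≤ 4 * (t / r ^ 2) / (1 - m) := by
  obtain ⟨h1, h2⟩ := mul_sq_le_div_sq_and_le_div_sq ht hr0 hr1
  have ht2 : 0 ≤ t * r ^ 2 := by positivity
  have hu : 0 ≤ t / r ^ 2 := by positivity
  have p1 : 1 - t * r ^ 2 ≠ 0 := by linarith
  have p2 : 1 - t / r ^ 2 ≠ 0 := by linarith
  have p3 : 1 - t ≠ 0 := by linarith
  have hlog : log (mityukBase t r)
      = log (1 - t * r ^ 2) + log (1 - t / r ^ 2) - 2 * log (1 - t) := by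
    rw [mityukBase, log_div (mul_ne_zero p1 p2) (pow_ne_zero 2 p3), log_mul p1 p2, log_pow]
    push_cast; ring
  have b1 := abs_log_one_sub_le ((abs_of_nonneg ht2).trans_le (h1.trans htr)) hm
  have b2 := abs_log_one_sub_le ((abs_of_nonneg hu).trans_le htr) hm
  have b3 := abs_log_one_sub_le ((abs_of_nonneg ht).trans_le (h2.trans htr)) hm
  rw [abs_of_nonneg ht2] at b1
  rw [abs_of_nonneg hu] at b2
  rw [abs_of_nonneg ht] at b3
  have hm' : 0 < 1 - m := by linarith
  have c1 : t * r ^ 2 / (1 - m) ≤ t / r ^ 2 / (1 - m) := by gcongr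
  have c3 : t / (1 - m) ≤ t / r ^ 2 / (1 - m) := by gcongr
  rw [hlog]
  calc _ ≤ |log (1 - t * r ^ 2)| + |log (1 - t / r ^ 2)| + 2 * |log (1 - t)| := by
        have := abs_sub (log (1 - t * r ^ 2) + log (1 - t / r ^ 2)) (2 * log (1 - t))
        have := abs_add_le (log (1 - t * r ^ 2)) (log (1 - t / r ^ 2))
        rw [abs_mul, abs_two] at *
        linarith
    _ ≤ 4 * (t / r ^ 2) / (1 - m) := by
        rw [mul_div_assoc]; linarith

end Base

noncomputable def mityukLog (q r : ℝ) (j : ℕ) : ℝ :=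
  (-1) ^ j * log (mityukBase (q ^ (2 * j)) r)

noncomputable def mityukTail (q r : ℝ) : ℝ :=
  ∑' j, mityukLog q r (j + 2)

section Annulus

variable {q r : ℝ}

lemma sq_lt_one_of_mem_Ioo (hq0 : 0 < q) (hr : r ∈ Ioo q 1) : q ^ 2 < 1 :=
  pow_lt_one₀ hq0.le (hr.1.trans hr.2) two_ne_zero

lemma pow_two_mul_div_sq_le (hq0 : 0 < q) (hr : r ∈ Ioo q 1) (j : ℕ) :
    q ^ (2 * (j + 1)) / r ^ 2 ≤ (q ^ 2) ^ j := by
  have hq2 : q ^ 2 ≤ r ^ 2 := pow_le_pow_left₀ hq0.le hr.1.le 2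
  rw [div_le_iff₀ (pow_pos (hq0.trans hr.1) 2), pow_mul, pow_succ]
  gcongr

lemma mityukBase_pos_of_mem_Ioo (hq0 : 0 < q) (hr : r ∈ Ioo q 1) (j : ℕ) :
    0 < mityukBase (q ^ (2 * (j + 1))) r := by
  have hr0 : 0 < r := hq0.trans hr.1
  refine mityukBase_pos (by positivity) hr0 hr.2.le ?_
  rw [div_lt_one (by positivity), pow_mul]
  calc (q ^ 2) ^ (j + 1) ≤ q ^ 2 :=
        pow_le_of_le_one (by positivity) (sq_lt_one_of_mem_Ioo hq0 hr).le (by omega)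
    _ < r ^ 2 := by gcongr; exact hr.1

lemma abs_mityukLog_add_two_le (hq0 : 0 < q) (hr : r ∈ Ioo q 1) (j : ℕ) :
    |mityukLog q r (j + 2)| ≤ 4 * q ^ 2 / (1 - q ^ 2) * (q ^ 2) ^ j := by
  have hq2 := sq_lt_one_of_mem_Ioo hq0 hr
  have hbound := pow_two_mul_div_sq_le hq0 hr (j + 1)
  have hmono : (q ^ 2) ^ (j + 1) ≤ q ^ 2 := pow_le_of_le_one (by positivity) hq2.le (by omega)
  rw [mityukLog, abs_mul, abs_pow, abs_neg, abs_one, one_pow, one_mul]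
  calc _ ≤ 4 * (q ^ (2 * (j + 2)) / r ^ 2) / (1 - q ^ 2) :=
        abs_log_mityukBase_le (by positivity) (hq0.trans hr.1) hr.2.le (hbound.trans hmono) hq2
    _ ≤ 4 * (q ^ 2) ^ (j + 1) / (1 - q ^ 2) := by gcongr
    _ = _ := by ring

lemma hasSum_mityukLog_majorant (hq2 : q ^ 2 < 1) :
    HasSum (fun j : ℕ => 4 * q ^ 2 / (1 - q ^ 2) * (q ^ 2) ^ j)
      (4 * q ^ 2 / (1 - q ^ 2) ^ 2) := by
  have h := (hasSum_geometric_of_lt_one (sq_nonneg q) hq2).mul_left (4 * q ^ 2 / (1 - q ^ 2))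
  rwa [← div_eq_mul_inv, div_div, ← sq] at h

lemma summable_mityukLog_add_two (hq0 : 0 < q) (hr : r ∈ Ioo q 1) :
    Summable fun j => mityukLog q r (j + 2) :=
  (hasSum_mityukLog_majorant (sq_lt_one_of_mem_Ioo hq0 hr)).summable.of_norm_bounded
    (abs_mityukLog_add_two_le hq0 hr)

lemma abs_mityukTail_le (hq0 : 0 < q) (hr : r ∈ Ioo q 1) :
    |mityukTail q r| ≤ 4 * q ^ 2 / (1 - q ^ 2) ^ 2 := by
  rw [← Real.norm_eq_abs]
  exact tsum_of_norm_bounded (hasSum_mityukLog_majorant (sq_lt_one_of_mem_Ioo hq0 hr))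
    (abs_mityukLog_add_two_le hq0 hr)

lemma mityukFactorRad_eq_exp_mityukLog (hq0 : 0 < q) (hr : r ∈ Ioo q 1) (j : ℕ) :
    mityukFactorRad q r (j + 1) = exp (mityukLog q r (j + 1)) :=
  zpow_neg_one_pow_eq_exp (mityukBase_pos_of_mem_Ioo hq0 hr j) (j + 1)

lemma hasProd_mityukFactorRad (hq0 : 0 < q) (hr : r ∈ Ioo q 1) :
    HasProd (fun j => mityukFactorRad q r (j + 1))
      ((mityukBase (q ^ 2) r)⁻¹ * exp (mityukTail q r)) := by
  have hsum : HasSum (fun j => mityukLog q r (j + 1)) (mityukLog q r 1 + mityukTail q r) :=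
    HasSum.zero_add (f := fun j => mityukLog q r (j + 1))
      (summable_mityukLog_add_two hq0 hr).hasSum
  have hfirst : exp (mityukLog q r 1) = (mityukBase (q ^ 2) r)⁻¹ := by
    rw [mityukLog, pow_one, mul_one, neg_one_mul, exp_neg,
      exp_log (mityukBase_pos_of_mem_Ioo hq0 hr 0)]
  convert hsum.rexp using 1
  · exact funext (mityukFactorRad_eq_exp_mityukLog hq0 hr)
  · rw [exp_add, hfirst]

lemma mityukRadiusRad_eq (hq0 : 0 < q) (hr : r ∈ Ioo q 1) :
    mityukRadiusRad q r = (1 - r ^ 2) / mityukBase (q ^ 2) r * exp (mityukTail q r) := by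
  rw [mityukRadiusRad, (hasProd_mityukFactorRad hq0 hr).tprod_eq, div_eq_mul_inv, mul_assoc]

end Annulus

section Prefactor

variable {q : ℝ}

lemma continuousAt_mityukBase (t : ℝ) {r : ℝ} (hr : r ≠ 0) :
    ContinuousAt (mityukBase t) r := by
  unfold mityukBase
  fun_prop (disch := positivity)

lemma tendsto_one_sub_sq_div_mityukBase_nhds_one (hq : q ^ 2 ≠ 1) :
    Tendsto (fun r => (1 - r ^ 2) / mityukBase (q ^ 2) r) (𝓝 1) (𝓝 0) := by
  have hbase : mityukBase (q ^ 2) 1 = 1 := by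
    rw [mityukBase, one_pow, mul_one, div_one, ← sq,
      div_self (pow_ne_zero 2 (sub_ne_zero.2 hq.symm))]
  have hcont : ContinuousAt (fun r => (1 - r ^ 2) / mityukBase (q ^ 2) r) 1 :=
    (by fun_prop : ContinuousAt (fun r : ℝ => 1 - r ^ 2) 1).div
      (continuousAt_mityukBase _ one_ne_zero) (by rw [hbase]; exact one_ne_zero)
  simpa [hbase] using hcont.tendsto

lemma tendsto_one_sub_sq_div_mityukBase_nhdsWithin (hq0 : 0 < q) (hq1 : q < 1) :
    Tendsto (fun r => (1 - r ^ 2) / mityukBase (q ^ 2) r) (𝓝[Ioo q 1] q) atTop := by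
  have hbase : mityukBase (q ^ 2) q = 0 := by
    simp [mityukBase, div_self (pow_ne_zero 2 hq0.ne')]
  have hbase_pos : Tendsto (mityukBase (q ^ 2)) (𝓝[Ioo q 1] q) (𝓝[>] 0) := by
    refine tendsto_nhdsWithin_of_tendsto_nhds_of_eventually_within _ ?_ ?_
    · have h := (continuousAt_mityukBase (q ^ 2) hq0.ne').tendsto
      rw [hbase] at h
      exact h.mono_left nhdsWithin_le_nhds
    · filter_upwards [self_mem_nhdsWithin] with r hr
      simpa using mityukBase_pos_of_mem_Ioo hq0 hr 0
  have hnum : Tendsto (fun r : ℝ => 1 - r ^ 2) (𝓝[Ioo q 1] q) (𝓝 (1 - q ^ 2)) :=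
    ((continuous_const.sub (continuous_pow 2)).tendsto q).mono_left nhdsWithin_le_nhds
  have hinv : Tendsto (fun r => (mityukBase (q ^ 2) r)⁻¹) (𝓝[Ioo q 1] q) atTop :=
    tendsto_inv_nhdsGT_zero.comp hbase_pos
  simpa only [div_eq_mul_inv] using
    hnum.pos_mul_atTop (sub_pos.2 (pow_lt_one₀ hq0.le hq1 two_ne_zero)) hinv

end Prefactor

/-- For `0 < q < 1`, the alternating product defining `f(r)` converges
for every `r ∈ (q,1)`, `f(r) → 0` as `r → 1⁻`, and `f(r) → +∞` as `r → q⁺`. -/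
theorem mityuk_stmt7 (q : ℝ) (hq0 : 0 < q) (hq1 : q < 1) :
    (∀ r ∈ Set.Ioo q 1, Multipliable (fun j : ℕ => mityukFactorRad q r (j + 1))) ∧
    Filter.Tendsto (mityukRadiusRad q) (nhdsWithin 1 (Set.Ioo q 1)) (nhds 0) ∧
    Filter.Tendsto (mityukRadiusRad q) (nhdsWithin q (Set.Ioo q 1)) Filter.atTop := by
  have hq2 : q ^ 2 < 1 := pow_lt_one₀ hq0.le hq1 two_ne_zero
  set K := 4 * q ^ 2 / (1 - q ^ 2) ^ 2
  refine ⟨fun r hr => (hasProd_mityukFactorRad hq0 hr).multipliable, ?_, ?_⟩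
  · have hbdd : IsBoundedUnder (· ≤ ·) (𝓝[Ioo q 1] 1) (norm ∘ fun r => exp (mityukTail q r)) :=
      isBoundedUnder_of_eventually_le (a := exp K) <| eventually_nhdsWithin_of_forall fun r hr => by
        simpa using exp_le_exp.2 (le_of_abs_le (abs_mityukTail_le hq0 hr))
    have hpre := (tendsto_one_sub_sq_div_mityukBase_nhds_one hq2.ne).mono_left
      (nhdsWithin_le_nhds (s := Ioo q 1))
    refine (hpre.zero_mul_isBoundedUnder_le hbdd).congr' ?_
    filter_upwards [self_mem_nhdsWithin] with r hr using (mityukRadiusRad_eq hq0 hr).symm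
  · refine tendsto_atTop_mono' _ ?_
      ((tendsto_one_sub_sq_div_mityukBase_nhdsWithin hq0 hq1).atTop_mul_const (exp_pos (-K)))
    filter_upwards [self_mem_nhdsWithin] with r hr
    have hpre : 0 ≤ (1 - r ^ 2) / mityukBase (q ^ 2) r :=
      div_nonneg (by nlinarith [hr.1, hr.2, hq0.trans hr.1])
        (mityukBase_pos_of_mem_Ioo hq0 hr 0).le
    rw [mityukRadiusRad_eq hq0 hr]
    gcongr
    exact neg_le_of_abs_le (abs_mityukTail_le hq0 hr)
end

section
/- Fix 0 < q < 1 and let R(r) = (1 − r²) ∏_{j=1}^{∞} [(1 − q^{2j} r²)(1 − q^{2j}/r²)]/(1 − q^{2j})² for r ∈ (q,1). Then R is differentiable on (q,1) and r = √q is a critical point of R, i.e. R'(√q) = 0. -/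
/-- Mityuk's radius for the annulus `{q < |z| < 1}` with respect to the circular-slit
canonical domain: `R(r) = (1 − r²) ∏_{j=1}^∞ (1 − q^{2j} r²)(1 − q^{2j}/r²)/(1 − q^{2j})²`. -/
noncomputable def mityukRadiusCirc (q r : ℝ) : ℝ :=
  (1 - r ^ 2) *
    ∏' j : ℕ,
      ((1 - q ^ (2 * (j + 1)) * r ^ 2) * (1 - q ^ (2 * (j + 1)) / r ^ 2)) /
        (1 - q ^ (2 * (j + 1))) ^ 2

/-!
With `Q = q²` and the q-Pochhammer symbol `(a; Q)_∞ = ∏_{j ≥ 0} (1 - a Qʲ)`, the radius is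
`R(r) = (r²; Q)_∞ (Q/r²; Q)_∞ / (Q; Q)_∞²`, which is invariant under the inversion `r ↦ q / r`
of the annulus. That map fixes `√q` with derivative `-1` there, so `R'(√q) = -R'(√q)`.
Differentiability comes from taking logarithms: `log (a; Q)_∞` is a series whose termwise
derivatives are dominated by a geometric series.
-/

open Real Set Filter Topology

noncomputable def logQPochhammer (a Q : ℝ) : ℝ := ∑' j : ℕ, log (1 - a * Q ^ j)

theorem summable_log_one_sub_mul_pow (a : ℝ) {Q : ℝ} (hQ : |Q| < 1) :
    Summable fun j : ℕ => log (1 - a * Q ^ j) := by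
  simpa only [sub_eq_add_neg] using
    Real.summable_log_one_add_of_summable ((summable_geometric_of_abs_lt_one hQ).mul_left a).neg

theorem mul_pow_lt {x b Q : ℝ} (hxb : x < b) (hb : 0 < b) (hQ0 : 0 ≤ Q) (hQ1 : Q ≤ 1) (j : ℕ) :
    x * Q ^ j < b := by
  have hQj : Q ^ j ≤ 1 := pow_le_one₀ hQ0 hQ1
  rcases le_or_gt x 0 with hx | hx
  · nlinarith [pow_nonneg hQ0 j]
  · nlinarith

theorem one_sub_mul_pow_pos {a Q : ℝ} (ha : a < 1) (hQ0 : 0 ≤ Q) (hQ1 : Q ≤ 1) (j : ℕ) :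
    0 < 1 - a * Q ^ j :=
  sub_pos.mpr (mul_pow_lt ha one_pos hQ0 hQ1 j)

theorem differentiableOn_logQPochhammer {Q : ℝ} (hQ0 : 0 ≤ Q) (hQ1 : Q < 1) :
    DifferentiableOn ℝ (logQPochhammer · Q) (Iio 1) := by
  intro a ha
  obtain ⟨b, hab, hb1⟩ := exists_between (max_lt (mem_Iio.mp ha) one_pos)
  rw [max_lt_iff] at hab
  have hpos : ∀ j, ∀ x ∈ Iio b, 1 - b < 1 - x * Q ^ j := fun j x hx =>
    sub_lt_sub_left (mul_pow_lt hx hab.2 hQ0 hQ1.le j) 1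
  have hderiv : ∀ j, ∀ x ∈ Iio b,
      HasDerivAt (fun x => log (1 - x * Q ^ j)) (-Q ^ j / (1 - x * Q ^ j)) x := by
    intro j x hx
    simpa using ((hasDerivAt_mul_const (Q ^ j)).const_sub 1).log (by linarith [hpos j x hx])
  have hbound : ∀ j, ∀ x ∈ Iio b, ‖-Q ^ j / (1 - x * Q ^ j)‖ ≤ Q ^ j / (1 - b) := by
    intro j x hx
    have := hpos j x hx
    rw [norm_div, norm_neg, Real.norm_of_nonneg (pow_nonneg hQ0 j),
      Real.norm_of_nonneg (by linarith)]
    exact div_le_div_of_nonneg_left (pow_nonneg hQ0 j) (by linarith) this.le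
  exact (hasDerivAt_tsum_of_isPreconnected
    ((summable_geometric_of_lt_one hQ0 hQ1).div_const _) isOpen_Iio isPreconnected_Iio
    hderiv hbound hab.1 (summable_log_one_sub_mul_pow a (by rwa [abs_of_nonneg hQ0])) hab.1
    ).differentiableAt.differentiableWithinAt

theorem mityukRadiusCirc_eq_exp {q r : ℝ} (hr : r ^ 2 ∈ Ioo (q ^ 2) 1) :
    mityukRadiusCirc q r = exp (logQPochhammer (r ^ 2) (q ^ 2)
      + logQPochhammer (q ^ 2 / r ^ 2) (q ^ 2) - 2 * logQPochhammer (q ^ 2) (q ^ 2)) := by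
  obtain ⟨hqr, hr1⟩ := hr
  have hr0 : 0 < r ^ 2 := (sq_nonneg q).trans_lt hqr
  have hQ0 : 0 ≤ q ^ 2 := sq_nonneg q
  have hQ1 : q ^ 2 < 1 := hqr.trans hr1
  have hQ : |q ^ 2| < 1 := by rwa [abs_of_nonneg hQ0]
  have hqr1 : q ^ 2 / r ^ 2 < 1 := (div_lt_one hr0).mpr hqr
  have hpos {a : ℝ} (ha : a < 1) (j : ℕ) : 0 < 1 - a * (q ^ 2) ^ j :=
    one_sub_mul_pow_pos ha hQ0 hQ1.le j
  have hA : HasSum (fun j : ℕ => log (1 - r ^ 2 * (q ^ 2) ^ (j + 1)))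
      (logQPochhammer (r ^ 2) (q ^ 2) - log (1 - r ^ 2)) := by
    have := (summable_log_one_sub_mul_pow (r ^ 2) hQ).hasSum
    rw [← hasSum_nat_add_iff' 1] at this
    simpa [logQPochhammer] using this
  have hB : HasSum (fun j : ℕ => log (1 - q ^ 2 / r ^ 2 * (q ^ 2) ^ j))
      (logQPochhammer (q ^ 2 / r ^ 2) (q ^ 2)) :=
    (summable_log_one_sub_mul_pow (q ^ 2 / r ^ 2) hQ).hasSum
  have hC : HasSum (fun j : ℕ => log (1 - (q ^ 2) ^ (j + 1))) (logQPochhammer (q ^ 2) (q ^ 2)) := by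
    convert (summable_log_one_sub_mul_pow (q ^ 2) hQ).hasSum using 3 with j
    · rw [pow_succ']
    · rfl
  have hA_pos (j : ℕ) := hpos hr1 (j + 1)
  have hB_pos (j : ℕ) := hpos hqr1 j
  have hC_pos (j : ℕ) : 0 < 1 - (q ^ 2) ^ (j + 1) := by simpa [pow_succ'] using hpos hQ1 j
  have hfactor (j : ℕ) : ((1 - q ^ (2 * (j + 1)) * r ^ 2) * (1 - q ^ (2 * (j + 1)) / r ^ 2)) /
      (1 - q ^ (2 * (j + 1))) ^ 2 = (1 - r ^ 2 * (q ^ 2) ^ (j + 1)) *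
        (1 - q ^ 2 / r ^ 2 * (q ^ 2) ^ j) / (1 - (q ^ 2) ^ (j + 1)) ^ 2 := by
    rw [pow_mul]; field_simp; ring
  have hlog (j : ℕ) : log ((1 - r ^ 2 * (q ^ 2) ^ (j + 1)) *
      (1 - q ^ 2 / r ^ 2 * (q ^ 2) ^ j) / (1 - (q ^ 2) ^ (j + 1)) ^ 2) =
      log (1 - r ^ 2 * (q ^ 2) ^ (j + 1)) + log (1 - q ^ 2 / r ^ 2 * (q ^ 2) ^ j)
        - 2 * log (1 - (q ^ 2) ^ (j + 1)) := by
    rw [log_div (mul_pos (hA_pos j) (hB_pos j)).ne' (pow_pos (hC_pos j) 2).ne', log_mul (hA_pos j).ne' (hB_pos j).ne',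
      log_pow]
    push_cast; ring
  have hsum := (hA.add hB).sub (hC.mul_left 2)
  rw [← funext hlog] at hsum
  have hprod := Real.hasProd_of_hasSum_log
    (fun j => div_pos (mul_pos (hA_pos j) (hB_pos j)) (pow_pos (hC_pos j) 2)) hsum
  rw [mityukRadiusCirc, funext hfactor, hprod.tprod_eq]
  nth_rw 1 [← exp_log (sub_pos.mpr hr1)]
  rw [← exp_add]
  ring_nf

theorem sq_mem_Ioo_sq_of_mem_Ioo {q r : ℝ} (hq : 0 ≤ q) (hr : r ∈ Ioo q 1) :
    r ^ 2 ∈ Ioo (q ^ 2) 1 :=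
  ⟨pow_lt_pow_left₀ hr.1 hq two_ne_zero, pow_lt_one₀ (hq.trans hr.1.le) hr.2 two_ne_zero⟩

theorem mityukRadiusCirc_div {q r : ℝ} (hq : q ≠ 0) (hr : r ^ 2 ∈ Ioo (q ^ 2) 1) :
    mityukRadiusCirc q (q / r) = mityukRadiusCirc q r := by
  have hr0 : 0 < r ^ 2 := (sq_nonneg q).trans_lt hr.1
  have hq0 : 0 < q ^ 2 := by positivity
  have hqr : (q / r) ^ 2 ∈ Ioo (q ^ 2) 1 := by
    rw [div_pow, mem_Ioo, lt_div_iff₀ hr0, div_lt_one hr0]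
    exact ⟨mul_lt_of_lt_one_right hq0 hr.2, hr.1⟩
  rw [mityukRadiusCirc_eq_exp hr, mityukRadiusCirc_eq_exp hqr, div_pow,
    div_div_cancel₀ (pow_ne_zero 2 hq), add_comm (logQPochhammer (q ^ 2 / r ^ 2) _)]

theorem differentiableAt_mityukRadiusCirc {q r : ℝ} (hr : r ^ 2 ∈ Ioo (q ^ 2) 1) :
    DifferentiableAt ℝ (mityukRadiusCirc q) r := by
  obtain ⟨hqr2, hr1⟩ := hr
  have hQ0 : 0 ≤ q ^ 2 := sq_nonneg q
  have hQ1 : q ^ 2 < 1 := hqr2.trans hr1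
  have hnear : ∀ᶠ x in 𝓝 r, x ^ 2 ∈ Ioo (q ^ 2) 1 :=
    ((continuous_pow 2).tendsto r).eventually (Ioo_mem_nhds hqr2 hr1)
  have hP {f : ℝ → ℝ} (hf : DifferentiableAt ℝ f r) (hfr : f r < 1) :
      DifferentiableAt ℝ (fun x => logQPochhammer (f x) (q ^ 2)) r :=
    ((differentiableOn_logQPochhammer hQ0 hQ1).differentiableAt (Iio_mem_nhds hfr)).comp r hf
  have hr0 : 0 < r ^ 2 := hQ0.trans_lt hqr2
  have hr0' : r ^ 2 ≠ 0 := hr0.ne'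
  have hqr : q ^ 2 / r ^ 2 < 1 := (div_lt_one hr0).mpr hqr2
  have hG : DifferentiableAt ℝ (fun x => exp (logQPochhammer (x ^ 2) (q ^ 2)
      + logQPochhammer (q ^ 2 / x ^ 2) (q ^ 2) - 2 * logQPochhammer (q ^ 2) (q ^ 2))) r := by
    fun_prop (disch := assumption)
  exact hG.congr_of_eventuallyEq (hnear.mono fun x hx => mityukRadiusCirc_eq_exp hx)

theorem deriv_eq_zero_of_comp_eventuallyEq {𝕜 : Type*} [NontriviallyNormedField 𝕜] [CharZero 𝕜]
    {f φ : 𝕜 → 𝕜} {x : 𝕜} (hf : DifferentiableAt 𝕜 f x) (hφ : HasDerivAt φ (-1) x)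
    (hφx : φ x = x) (hfφ : f ∘ φ =ᶠ[𝓝 x] f) : deriv f x = 0 := by
  have hfφx : HasDerivAt f (deriv f x) (φ x) := by
    rw [hφx]; exact hf.hasDerivAt
  have hcomp : HasDerivAt (f ∘ φ) (deriv f x * -1) x := hfφx.comp x hφ
  have h := (hcomp.congr_of_eventuallyEq hfφ.symm).deriv
  rwa [mul_neg_one, eq_comm, CharZero.neg_eq_self_iff] at h

/-- For `0 < q < 1`, `R` is differentiable on `(q,1)` and `r = √q` is a
critical point of `R`, i.e. `R'(√q) = 0`. -/
theorem mityuk_stmt8 (q : ℝ) (hq0 : 0 < q) (hq1 : q < 1) :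
    DifferentiableOn ℝ (mityukRadiusCirc q) (Set.Ioo q 1) ∧
    deriv (mityukRadiusCirc q) (Real.sqrt q) = 0 := by
  have hsq : √q ∈ Ioo q 1 :=
    ⟨(lt_sqrt hq0.le).mpr (by nlinarith), (sqrt_lt' one_pos).mpr (by linarith)⟩
  have hdiv : HasDerivAt (fun r => q / r) (-1) √q := by
    have := (hasDerivAt_inv (sqrt_pos.mpr hq0).ne').const_mul q
    rwa [sq_sqrt hq0.le, mul_neg, mul_inv_cancel₀ hq0.ne'] at this
  refine ⟨fun r hr => (differentiableAt_mityukRadiusCirc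
    (sq_mem_Ioo_sq_of_mem_Ioo hq0.le hr)).differentiableWithinAt, ?_⟩
  refine deriv_eq_zero_of_comp_eventuallyEq
    (differentiableAt_mityukRadiusCirc (sq_mem_Ioo_sq_of_mem_Ioo hq0.le hsq)) hdiv div_sqrt ?_
  filter_upwards [isOpen_Ioo.mem_nhds hsq] with r hr
  exact mityukRadiusCirc_div hq0.ne' (sq_mem_Ioo_sq_of_mem_Ioo hq0.le hr)
end
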